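/- Complementation upper bound: let L be a suffix-free regular language over an alphabet Σ accepted by an NFA with m states. Then NSC(Σ* \ L) ≤ 2^{m−1} + 1, i.e., there is an NFA (indeed a DFA) with at most 2^{m−1} + 1 states accepting the complement of L. -/

import Mathlib

open Computability

/-- A nondeterministic finite automaton with a single start state and
no ε-transitions. -/
structure SNFA (α : Type) (σ : Type) where
  step : σ → α → Set σ
  start : σ
  accept : Set σ

namespace SNFA

variable {α σ : Type}

/-- The set of states reachable from some state in `S` by one transition on `a`. -/
def stepSet (M : SNFA α σ) (S : Set σ) (a : α) : Set σ :=
  ⋃ s ∈ S, M.step s a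

/-- The set of states reachable from the set `S` of states by reading the word `w`. -/
def evalFrom (M : SNFA α σ) (S : Set σ) (w : List α) : Set σ :=
  w.foldl M.stepSet S

/-- The language accepted by `M`: all words spelled out by a path
from the start state to an accepting state. -/
def accepts (M : SNFA α σ) : Language α :=
  {w | ∃ q ∈ M.accept, q ∈ M.evalFrom {M.start} w}

end SNFA

/-- A language is suffix-free if no word of the language is a proper suffix
of another word of the language. -/
def SuffixFree {α : Type} (L : Language α) : Prop :=
  ∀ u v : List α, u ∈ L → v ∈ L → u <:+ v → u = v

/-- `NSCle L k`: there is an NFA with at most `k` states accepting `L`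
(so the nondeterministic state complexity of `L` is at most `k`). -/
def NSCle {α : Type} (L : Language α) (k : ℕ) : Prop :=
  ∃ (σ : Type) (x : Fintype σ) (M : SNFA α σ), M.accepts = L ∧ @Fintype.card σ x ≤ k

/-- `NSCge L k`: every NFA accepting `L` has at least `k` states
(so the nondeterministic state complexity of `L` is at least `k`). -/
def NSCge {α : Type} (L : Language α) (k : ℕ) : Prop :=
  ∀ (σ : Type) [Fintype σ] (M : SNFA α σ), M.accepts = L → k ≤ Fintype.card σ

/-- `NSCeq L m`: the nondeterministic state complexity of `L` is exactly `m`: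
some NFA with `m` states accepts `L` and every NFA accepting `L` has at least
`m` states. -/
def NSCeq {α : Type} (L : Language α) (m : ℕ) : Prop :=
  NSCle L m ∧ NSCge L m

/-! Deleting every transition into the start state does not change a suffix-free language:
a path that re-enters the start state ends with an accepting path for a proper suffix.
In the pruned automaton the start state is never revisited, so every subset reached after a
nonempty word avoids it, and the subset construction needs only the initial state together with
the `2^(m-1)` subsets of the remaining states. -/

namespace SNFA

variable {α σ : Type}

theorem mem_stepSet_iff {M : SNFA α σ} {S : Set σ} {a : α} {q : σ} :
    q ∈ M.stepSet S a ↔ ∃ p ∈ S, q ∈ M.step p a := by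
  simp [stepSet]

theorem evalFrom_cons (M : SNFA α σ) (S : Set σ) (a : α) (w : List α) :
    M.evalFrom S (a :: w) = M.evalFrom (M.stepSet S a) w :=
  rfl

theorem evalFrom_append_singleton (M : SNFA α σ) (S : Set σ) (u : List α) (a : α) :
    M.evalFrom S (u ++ [a]) = M.stepSet (M.evalFrom S u) a := by
  simp [evalFrom, List.foldl_append]

theorem stepSet_mono (M : SNFA α σ) {S T : Set σ} (h : S ⊆ T) (a : α) :
    M.stepSet S a ⊆ M.stepSet T a :=
  Set.biUnion_subset_biUnion_left h

theorem evalFrom_mono (M : SNFA α σ) (w : List α) {S T : Set σ} (h : S ⊆ T) :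
    M.evalFrom S w ⊆ M.evalFrom T w := by
  induction w generalizing S T with
  | nil => exact h
  | cons a w ih => exact ih (M.stepSet_mono h a)

def prune (M : SNFA α σ) : SNFA α σ where
  step q a := M.step q a \ {M.start}
  start := M.start
  accept := M.accept

theorem start_not_mem_step_prune (M : SNFA α σ) (q : σ) (a : α) :
    M.prune.start ∉ M.prune.step q a :=
  fun h => h.2 rfl

theorem evalFrom_prune_subset (M : SNFA α σ) (S : Set σ) (w : List α) :
    M.prune.evalFrom S w ⊆ M.evalFrom S w := by
  induction w generalizing S with
  | nil => exact subset_rfl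
  | cons a w ih =>
    have hstep : M.prune.stepSet S a ⊆ M.stepSet S a :=
      Set.biUnion_mono subset_rfl fun _ _ => Set.sdiff_subset
    exact (ih _).trans (M.evalFrom_mono w hstep)

theorem mem_evalFrom_prune_or_proper_suffix (M : SNFA α σ) (w : List α) (q : σ)
    (hq : q ∈ M.evalFrom {M.start} w) :
    q ∈ M.prune.evalFrom {M.start} w ∨ ∃ v, v <:+ w ∧ v ≠ w ∧ q ∈ M.evalFrom {M.start} v := by
  induction w using List.reverseRecOn generalizing q with
  | nil => exact Or.inl hq
  | append_singleton u a ih =>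
    rw [evalFrom_append_singleton, mem_stepSet_iff] at hq
    obtain ⟨p, hp, hpq⟩ := hq
    by_cases hq_start : q = M.start
    · exact Or.inr ⟨[], List.nil_suffix, by simp, by simp [evalFrom, hq_start]⟩
    rcases ih p hp with hp_prune | ⟨v, hv, hvw, hpv⟩
    · left
      rw [evalFrom_append_singleton, mem_stepSet_iff]
      exact ⟨p, hp_prune, hpq, hq_start⟩
    · right
      refine ⟨v ++ [a], List.suffix_append_self_iff.mpr hv, by simpa using hvw, ?_⟩
      rw [evalFrom_append_singleton, mem_stepSet_iff]
      exact ⟨p, hpv, hpq⟩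

theorem accepts_prune (M : SNFA α σ) (hsf : SuffixFree M.accepts) :
    M.prune.accepts = M.accepts := by
  ext w
  constructor
  · rintro ⟨q, hq_acc, hq⟩
    exact ⟨q, hq_acc, M.evalFrom_prune_subset _ w hq⟩
  · rintro ⟨q, hq_acc, hq⟩
    rcases M.mem_evalFrom_prune_or_proper_suffix w q hq with hq_prune | ⟨v, hv, hvw, hqv⟩
    · exact ⟨q, hq_acc, hq_prune⟩
    · exact absurd (hsf v w ⟨q, hq_acc, hqv⟩ ⟨q, hq_acc, hq⟩ hv) hvw

section SubsetDFA

variable (N : SNFA α σ)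

/-- `none` encodes the initial subset `{N.start}`; `some S` encodes a subset avoiding `N.start`. -/
def subsetOf : Option (Set {q : σ // q ≠ N.start}) → Set σ
  | none => {N.start}
  | some S => Subtype.val '' S

def subsetDFA : DFA α (Option (Set {q : σ // q ≠ N.start})) where
  step x a := some {q | (q : σ) ∈ N.stepSet (N.subsetOf x) a}
  start := none
  accept := {x | ∃ q ∈ N.accept, q ∈ N.subsetOf x}

variable {N}

theorem subsetOf_step_subsetDFA (hN : ∀ q a, N.start ∉ N.step q a)
    (x : Option (Set {q : σ // q ≠ N.start})) (a : α) :
    N.subsetOf (N.subsetDFA.step x a) = N.stepSet (N.subsetOf x) a := by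
  ext q
  constructor
  · rintro ⟨q, hq, rfl⟩
    exact hq
  · intro hq
    obtain ⟨p, -, hpq⟩ := mem_stepSet_iff.mp hq
    exact ⟨⟨q, fun h => hN p a (h ▸ hpq)⟩, hq, rfl⟩

theorem subsetOf_evalFrom_subsetDFA (hN : ∀ q a, N.start ∉ N.step q a)
    (x : Option (Set {q : σ // q ≠ N.start})) (w : List α) :
    N.subsetOf (N.subsetDFA.evalFrom x w) = N.evalFrom (N.subsetOf x) w := by
  induction w generalizing x with
  | nil => rfl
  | cons a w ih => rw [DFA.evalFrom_cons, ih, subsetOf_step_subsetDFA hN]; rfl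

theorem accepts_subsetDFA (hN : ∀ q a, N.start ∉ N.step q a) :
    N.subsetDFA.accepts = N.accepts := by
  ext w
  change (∃ q ∈ N.accept, q ∈ N.subsetOf (N.subsetDFA.evalFrom none w)) ↔ _
  rw [subsetOf_evalFrom_subsetDFA hN]
  rfl

end SubsetDFA

end SNFA

namespace DFA

variable {α τ : Type}

def toSNFA (D : DFA α τ) : SNFA α τ where
  step q a := {D.step q a}
  start := D.start
  accept := D.accept

theorem evalFrom_toSNFA (D : DFA α τ) (s : τ) (w : List α) :
    D.toSNFA.evalFrom {s} w = {D.evalFrom s w} := by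
  induction w generalizing s with
  | nil => rfl
  | cons a w ih =>
    rw [SNFA.evalFrom_cons, evalFrom_cons, ← ih]
    congr 1
    simp [SNFA.stepSet, toSNFA]

theorem accepts_toSNFA (D : DFA α τ) : D.toSNFA.accepts = D.accepts := by
  ext w
  change (∃ q ∈ D.accept, q ∈ D.toSNFA.evalFrom {D.start} w) ↔ D.eval w ∈ D.accept
  rw [evalFrom_toSNFA]
  simp only [Set.mem_singleton_iff, exists_eq_right]
  rfl

end DFA

/-- **Complementation, upper bound.** If a suffix-free language `L` is accepted
by an NFA with `m` states, then some NFA with at most `2^(m-1) + 1` states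
accepts the complement of `L`. -/
theorem complement_upper {α : Type} (L : Language α) (m : ℕ)
    (σ : Type) [Fintype σ] (M : SNFA α σ)
    (hM : M.accepts = L) (hcard : Fintype.card σ = m)
    (hsf : SuffixFree L) :
    NSCle {w | w ∉ L} (2 ^ (m - 1) + 1) := by
  classical
  subst hM hcard
  refine ⟨_, inferInstance, (M.prune.subsetDFAᶜ).toSNFA, ?_, ?_⟩
  · rw [DFA.accepts_toSNFA, DFA.accepts_compl,
      SNFA.accepts_subsetDFA M.start_not_mem_step_prune, M.accepts_prune hsf]
    rfl
  · have h_card : Fintype.card {q : σ // q ≠ M.prune.start} = Fintype.card σ - 1 := by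
      rw [Fintype.card_subtype_compl, Fintype.card_subtype_eq]
    rw [Fintype.card_option, Fintype.card_set, h_card]
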